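/- arXiv:quant-ph/0512245 — 4 statements merged into one kernel-verified Lean document; each statement's English description precedes it below -/
import Mathlib

section
/- For any real numbers λ₁, λ̃₁, λ₂, λ̃₂ with |λ₁| ≤ 1, |λ̃₁| ≤ 1, |λ₂| ≤ 1, |λ̃₂| ≤ 1, and any real coefficients γ₁₁, γ₁₂, γ₂₁, γ₂₂ satisfying γ₁₁γ₁₂ = -γ₂₁γ₂₂, the inequality |γ₁₁λ₁λ₂ + γ₁₂λ₁λ̃₂ + γ₂₁λ̃₁λ₂ + γ₂₂λ̃₁λ̃₂| ≤ 2·max(|γ₁₁|,|γ₁₂|,|γ₂₁|,|γ₂₂|) holds. -/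
lemma chsh_key (a b c d M : ℝ) (ha : |a| ≤ M) (hb : |b| ≤ M) (hc : |c| ≤ M)
    (hd : |d| ≤ M) (h : a * b = -(c * d)) : |a + c| + |b + d| ≤ 2 * M := by
  have hM0 : 0 ≤ M := le_trans (abs_nonneg a) ha
  rcases eq_or_lt_of_le hM0 with hM | hM
  · have ha0 : a = 0 := abs_eq_zero.mp (le_antisymm (hM ▸ ha) (abs_nonneg a))
    have hb0 : b = 0 := abs_eq_zero.mp (le_antisymm (hM ▸ hb) (abs_nonneg b))
    have hc0 : c = 0 := abs_eq_zero.mp (le_antisymm (hM ▸ hc) (abs_nonneg c))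
    have hd0 : d = 0 := abs_eq_zero.mp (le_antisymm (hM ▸ hd) (abs_nonneg d))
    simp [ha0, hb0, hc0, hd0, ← hM]
  · rw [abs_le] at ha hb hc hd
    rcases abs_cases (a + c) with ⟨e1, _⟩ | ⟨e1, _⟩ <;>
      rcases abs_cases (b + d) with ⟨e2, _⟩ | ⟨e2, _⟩ <;>
      rw [e1, e2] <;>
      nlinarith [mul_nonneg (by linarith : (0:ℝ) ≤ M - a) (by linarith : (0:ℝ) ≤ M - b),
        mul_nonneg (by linarith : (0:ℝ) ≤ M + a) (by linarith : (0:ℝ) ≤ M + b),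
        mul_nonneg (by linarith : (0:ℝ) ≤ M - a) (by linarith : (0:ℝ) ≤ M + b),
        mul_nonneg (by linarith : (0:ℝ) ≤ M + a) (by linarith : (0:ℝ) ≤ M - b),
        mul_nonneg (by linarith : (0:ℝ) ≤ M - c) (by linarith : (0:ℝ) ≤ M - d),
        mul_nonneg (by linarith : (0:ℝ) ≤ M + c) (by linarith : (0:ℝ) ≤ M + d),
        mul_nonneg (by linarith : (0:ℝ) ≤ M - c) (by linarith : (0:ℝ) ≤ M + d),
        mul_nonneg (by linarith : (0:ℝ) ≤ M + c) (by linarith : (0:ℝ) ≤ M - d), hM]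

theorem extended_chsh_pointwise_row
    (l1 l1' l2 l2' g11 g12 g21 g22 : ℝ)
    (h1 : |l1| ≤ 1) (h1' : |l1'| ≤ 1) (h2 : |l2| ≤ 1) (h2' : |l2'| ≤ 1)
    (hg : g11 * g12 = -(g21 * g22)) :
    |g11 * (l1 * l2) + g12 * (l1 * l2') + g21 * (l1' * l2) + g22 * (l1' * l2')|
      ≤ 2 * max (max |g11| |g12|) (max |g21| |g22|) := by
  set M := max (max |g11| |g12|) (max |g21| |g22|) with hMdef
  have hg11 : |g11| ≤ M := le_max_of_le_left (le_max_left _ _)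
  have hg12 : |g12| ≤ M := le_max_of_le_left (le_max_right _ _)
  have hg21 : |g21| ≤ M := le_max_of_le_right (le_max_left _ _)
  have hg22 : |g22| ≤ M := le_max_of_le_right (le_max_right _ _)
  set s := g11 * l2 + g12 * l2' with hs
  set t := g21 * l2 + g22 * l2' with ht
  -- bound for a linear combination of l2, l2'
  have lin : ∀ a b : ℝ, a * l2 + b * l2' ≤ |a| + |b| := by
    intro a b
    calc a * l2 + b * l2' ≤ |a * l2| + |b * l2'| := by
          exact le_trans (le_abs_self _) (abs_add_le _ _)
      _ = |a| * |l2| + |b| * |l2'| := by rw [abs_mul, abs_mul]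
      _ ≤ |a| * 1 + |b| * 1 := by
          gcongr <;> first | assumption | positivity
      _ = |a| + |b| := by ring
  have hmain : |s| + |t| ≤ 2 * M := by
    have habs : ∀ x : ℝ, |(-x)| ≤ M → |x| ≤ M := by intro x hx; rwa [abs_neg] at hx
    rcases abs_cases s with ⟨e1, _⟩ | ⟨e1, _⟩ <;> rcases abs_cases t with ⟨e2, _⟩ | ⟨e2, _⟩ <;>
      rw [e1, e2]
    · have := chsh_key g11 g12 g21 g22 M hg11 hg12 hg21 hg22 hg
      have h2 := lin (g11 + g21) (g12 + g22)
      have : s + t = (g11 + g21) * l2 + (g12 + g22) * l2' := by rw [hs, ht]; ring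
      linarith [chsh_key g11 g12 g21 g22 M hg11 hg12 hg21 hg22 hg,
        lin (g11 + g21) (g12 + g22)]
    · have key := chsh_key g11 g12 (-g21) (-g22) M hg11 hg12
        (by rwa [abs_neg]) (by rwa [abs_neg]) (by linear_combination hg)
      have hlin := lin (g11 + -g21) (g12 + -g22)
      have heq : s + -t = (g11 + -g21) * l2 + (g12 + -g22) * l2' := by
        rw [hs, ht]; ring
      linarith
    · have key := chsh_key (-g11) (-g12) g21 g22 M (by rwa [abs_neg]) (by rwa [abs_neg])
        hg21 hg22 (by linear_combination hg)
      have hlin := lin (-g11 + g21) (-g12 + g22)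
      have heq : -s + t = (-g11 + g21) * l2 + (-g12 + g22) * l2' := by
        rw [hs, ht]; ring
      linarith
    · have key := chsh_key (-g11) (-g12) (-g21) (-g22) M (by rwa [abs_neg])
        (by rwa [abs_neg]) (by rwa [abs_neg]) (by rwa [abs_neg]) (by linear_combination hg)
      have hlin := lin (-g11 + -g21) (-g12 + -g22)
      have heq : -s + -t = (-g11 + -g21) * l2 + (-g12 + -g22) * l2' := by
        rw [hs, ht]; ring
      linarith
  have hexpr : g11 * (l1 * l2) + g12 * (l1 * l2') + g21 * (l1' * l2) + g22 * (l1' * l2')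
      = l1 * s + l1' * t := by rw [hs, ht]; ring
  calc |g11 * (l1 * l2) + g12 * (l1 * l2') + g21 * (l1' * l2) + g22 * (l1' * l2')|
      = |l1 * s + l1' * t| := by rw [hexpr]
    _ ≤ |l1 * s| + |l1' * t| := abs_add_le _ _
    _ = |l1| * |s| + |l1'| * |t| := by rw [abs_mul, abs_mul]
    _ ≤ 1 * |s| + 1 * |t| := by gcongr <;> first | assumption | positivity
    _ = |s| + |t| := by ring
    _ ≤ 2 * M := hmain
end

section
/- For any real numbers λ₁, λ̃₁, λ₂, λ̃₂ with |λ₁| ≤ 1, |λ̃₁| ≤ 1, |λ₂| ≤ 1, |λ̃₂| ≤ 1, and any real coefficients γ₁₁, γ₁₂, γ₂₁, γ₂₂ satisfying γ₁₁γ₂₂ = -γ₁₂γ₂₁, the inequality |γ₁₁λ₁λ₂ + γ₁₂λ₁λ̃₂ + γ₂₁λ̃₁λ₂ + γ₂₂λ̃₁λ̃₂| ≤ 2·max(|γ₁₁|,|γ₁₂|,|γ₂₁|,|γ₂₂|) holds. -/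
private lemma sum_diff_abs (p q : ℝ) : |p + q| + |p - q| ≤ 2 * max |p| |q| := by
  have hp1 := le_max_left |p| |q|
  have hq1 := le_max_right |p| |q|
  have hp2 := le_abs_self p
  have hp3 := neg_abs_le p
  have hq2 := le_abs_self q
  have hq3 := neg_abs_le q
  rcases abs_cases (p + q) with ⟨e1, _⟩ | ⟨e1, _⟩ <;>
    rcases abs_cases (p - q) with ⟨e2, _⟩ | ⟨e2, _⟩ <;> linarith

private lemma key (a b c d x y : ℝ) (hx : |x| ≤ 1) (hy : |y| ≤ 1)
    (hg : a * d = -(b * c)) :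
    |a * x + b * y| + |c * x + d * y| ≤ 2 * max (max |a| |b|) (max |c| |d|) := by
  have hax : |a * x| ≤ |a| := by
    rw [abs_mul]; nlinarith [abs_nonneg a, abs_nonneg x]
  have hby : |b * y| ≤ |b| := by
    rw [abs_mul]; nlinarith [abs_nonneg b, abs_nonneg y]
  have hcx : |c * x| ≤ |c| := by
    rw [abs_mul]; nlinarith [abs_nonneg c, abs_nonneg x]
  have hdy : |d * y| ≤ |d| := by
    rw [abs_mul]; nlinarith [abs_nonneg d, abs_nonneg y]
  have hMab : max |a * x| |b * y| ≤ max |a| |b| := max_le_max hax hby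
  have hM1 : max |a| |b| ≤ max (max |a| |b|) (max |c| |d|) := le_max_left _ _
  have hM2 : max |c| |d| ≤ max (max |a| |b|) (max |c| |d|) := le_max_right _ _
  by_cases ha : a = 0
  · by_cases hb : b = 0
    · subst ha hb
      have h3 := abs_add_le (c * x) (d * y)
      have h4 := le_max_left |c| |d|
      have h5 := le_max_right |c| |d|
      have e0 : (0:ℝ) * x + 0 * y = 0 := by ring
      rw [e0, abs_zero]
      simp only [abs_zero, max_self] at hM2 ⊢
      linarith
    · -- a = 0, b ≠ 0 ⇒ c = 0
      have hc : c = 0 := by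
        rw [ha, zero_mul] at hg
        have hbc : b * c = 0 := by linarith
        rcases mul_eq_zero.1 hbc with h | h
        · exact absurd h hb
        · exact h
      subst ha hc
      have e1 : (0:ℝ) * x + b * y = b * y := by ring
      have e2 : (0:ℝ) * x + d * y = d * y := by ring
      rw [e1, e2]
      have h1 : |b| ≤ max |(0:ℝ)| |b| := le_max_right _ _
      have h2 : |d| ≤ max |(0:ℝ)| |d| := le_max_right _ _
      have h3 := le_max_left (max |(0:ℝ)| |b|) (max |(0:ℝ)| |d|)
      have h4 := le_max_right (max |(0:ℝ)| |b|) (max |(0:ℝ)| |d|)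
      linarith
  · set t : ℝ := c / a with ht
    have hc : c = t * a := (div_mul_cancel₀ c ha).symm
    have hd : d = -(t * b) := by
      have h9 : a * (-(t * b)) = -(b * c) := by rw [hc]; ring
      exact mul_left_cancel₀ ha (hg.trans h9.symm)
    have hB : c * x + d * y = t * (a * x - b * y) := by rw [hc, hd]; ring
    have hsd := sum_diff_abs (a * x) (b * y)
    rcases le_total |t| 1 with htle | htge
    · have : |c * x + d * y| ≤ |a * x - b * y| := by
        rw [hB, abs_mul]
        nlinarith [abs_nonneg (a * x - b * y)]
      calc |a * x + b * y| + |c * x + d * y|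
          ≤ |a * x + b * y| + |a * x - b * y| := by linarith
        _ ≤ 2 * max |a * x| |b * y| := sum_diff_abs _ _
        _ ≤ 2 * max (max |a| |b|) (max |c| |d|) := by linarith
    · have hta : |c| = |t| * |a| := by rw [hc, abs_mul]
      have htb : |d| = |t| * |b| := by rw [hd, abs_neg, abs_mul]
      have hA : |a * x + b * y| ≤ |t| * |a * x + b * y| := by
        nlinarith [abs_nonneg (a * x + b * y)]
      have hB' : |c * x + d * y| = |t| * |a * x - b * y| := by rw [hB, abs_mul]
      have hMcd : max |c| |d| = |t| * max |a| |b| := by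
        rw [hta, htb]
        exact (mul_max_of_nonneg |a| |b| (abs_nonneg t)).symm
      have h0t : (0:ℝ) ≤ |t| := abs_nonneg t
      calc |a * x + b * y| + |c * x + d * y|
          ≤ |t| * (|a * x + b * y| + |a * x - b * y|) := by
            rw [hB']; linarith
        _ ≤ |t| * (2 * max |a * x| |b * y|) := by nlinarith
        _ ≤ |t| * (2 * max |a| |b|) := by nlinarith
        _ = 2 * max |c| |d| := by rw [hMcd]; ring
        _ ≤ 2 * max (max |a| |b|) (max |c| |d|) := by linarith

theorem extended_chsh_pointwise_diag
    (l1 l1' l2 l2' g11 g12 g21 g22 : ℝ)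
    (h1 : |l1| ≤ 1) (h1' : |l1'| ≤ 1) (h2 : |l2| ≤ 1) (h2' : |l2'| ≤ 1)
    (hg : g11 * g22 = -(g12 * g21)) :
    |g11 * (l1 * l2) + g12 * (l1 * l2') + g21 * (l1' * l2) + g22 * (l1' * l2')|
      ≤ 2 * max (max |g11| |g12|) (max |g21| |g22|) := by
  have hkey := key g11 g12 g21 g22 l2 l2' h2 h2' hg
  have e : g11 * (l1 * l2) + g12 * (l1 * l2') + g21 * (l1' * l2) + g22 * (l1' * l2')
      = l1 * (g11 * l2 + g12 * l2') + l1' * (g21 * l2 + g22 * l2') := by ring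
  rw [e]
  calc |l1 * (g11 * l2 + g12 * l2') + l1' * (g21 * l2 + g22 * l2')|
      ≤ |l1 * (g11 * l2 + g12 * l2')| + |l1' * (g21 * l2 + g22 * l2')| := abs_add_le _ _
    _ ≤ |g11 * l2 + g12 * l2'| + |g21 * l2 + g22 * l2'| := by
        rw [abs_mul, abs_mul]
        nlinarith [abs_nonneg (g11 * l2 + g12 * l2'), abs_nonneg (g21 * l2 + g22 * l2'),
          abs_nonneg l1, abs_nonneg l1']
    _ ≤ 2 * max (max |g11| |g12|) (max |g21| |g22|) := hkey
end

section
/- Let τ be a density operator on ℂ^{d₁} and ξ a density operator on ℂ^{d₂} with ‖ξ‖ = 1/d₂. Then for β ∈ [0,1], the operator Y = β·I/(d₁d₂²) - (1-β)·τ ⊗ ξ ⊗ ξ on ℂ^{d₁} ⊗ ℂ^{d₂} ⊗ ℂ^{d₂} is positive semidefinite whenever β ≥ d₁‖τ‖/(1 + d₁‖τ‖). -/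
/-!
In the Loewner order a positive semidefinite matrix lies below its operator norm times the
identity, and Kronecker products are monotone on positive semidefinite matrices. Hence
`τ ⊗ ξ ⊗ ξ ≤ ‖τ‖ ‖ξ‖² I = (‖τ‖ / d₂²) I`, and the threshold on `β` is equivalent to
`(1 - β) d₁ ‖τ‖ ≤ β`, i.e. to `(1 - β) ‖τ‖ / d₂² ≤ β / (d₁ d₂²)`.
-/

open ComplexOrder Kronecker

noncomputable def opNorm {n : Type*} [Fintype n] [DecidableEq n]
    (A : Matrix n n ℂ) : ℝ :=
  ‖Matrix.toEuclideanCLM (𝕜 := ℂ) A‖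

open scoped MatrixOrder Matrix.Norms.L2Operator

namespace Matrix

section Kronecker
variable {𝕜 : Type*} [RCLike 𝕜] {m n : Type*} [Fintype m] [Fintype n]

theorem kronecker_le_kronecker {A A' : Matrix m m 𝕜} {B B' : Matrix n n 𝕜}
    (hA : 0 ≤ A) (hB' : 0 ≤ B') (hAA' : A ≤ A') (hBB' : B ≤ B') : A ⊗ₖ B ≤ A' ⊗ₖ B' := by
  rw [le_iff] at hAA' hBB' ⊢
  rw [nonneg_iff_posSemidef] at hA hB'
  have hsplit : A' ⊗ₖ B' - A ⊗ₖ B = (A' - A) ⊗ₖ B' + A ⊗ₖ (B' - B) := by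
    rw [sub_eq_iff_eq_add, add_assoc, ← kronecker_add, sub_add_cancel, ← add_kronecker,
      sub_add_cancel]
  rw [hsplit]
  exact (hAA'.kronecker hB').add (hA.kronecker hBB')

variable [DecidableEq m] [DecidableEq n]

theorem kronecker_le_smul_one {A : Matrix m m 𝕜} {B : Matrix n n 𝕜} {a b : 𝕜}
    (hA : 0 ≤ A) (hB : 0 ≤ B) (ha : A ≤ a • 1) (hb : B ≤ b • 1) :
    A ⊗ₖ B ≤ (a * b) • 1 := by
  calc A ⊗ₖ B ≤ (a • 1 : Matrix m m 𝕜) ⊗ₖ (b • 1 : Matrix n n 𝕜) :=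
        kronecker_le_kronecker hA (hB.trans hb) ha hb
    _ = (a * b) • 1 := by rw [smul_kronecker, kronecker_smul, one_kronecker_one, smul_smul]

end Kronecker

theorem IsHermitian.le_opNorm_smul_one {n : Type*} [Fintype n] [DecidableEq n]
    {A : Matrix n n ℂ} (hA : A.IsHermitian) : A ≤ (opNorm A : ℂ) • 1 := by
  simpa [Algebra.algebraMap_eq_smul_one, opNorm, cstar_norm_def] using
    hA.isSelfAdjoint.le_algebraMap_norm_self

end Matrix

theorem sub_one_mul_le_of_div_one_add_le {x β : ℝ} (hx : 0 ≤ x) (h : x / (1 + x) ≤ β) :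
    (1 - β) * x ≤ β := by
  rw [div_le_iff₀ (by positivity)] at h
  linarith

theorem Y_posSemidef_general {d₁ d₂ : ℕ} [NeZero d₁]
    (τ : Matrix (Fin d₁) (Fin d₁) ℂ) (hτ : τ.PosSemidef)
    (ξ : Matrix (Fin d₂) (Fin d₂) ℂ) (hξ : ξ.PosSemidef)
    (hξn : opNorm ξ = 1 / d₂)
    (β : ℝ) (hβ : β ∈ Set.Icc (0:ℝ) 1)
    (hthr : d₁ * opNorm τ / (1 + d₁ * opNorm τ) ≤ β) :
    ((β / (d₁ * d₂ ^ 2) : ℂ) •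
        (1 : Matrix ((Fin d₁ × Fin d₂) × Fin d₂) ((Fin d₁ × Fin d₂) × Fin d₂) ℂ)
      - ((1 - β : ℝ) : ℂ) • (τ ⊗ₖ ξ ⊗ₖ ξ)).PosSemidef := by
  have hτn : 0 ≤ opNorm τ := norm_nonneg _
  set M : ℝ := opNorm τ * opNorm ξ * opNorm ξ
  have hρ : τ ⊗ₖ ξ ⊗ₖ ξ ≤ (M : ℂ) • 1 := by
    have hτ' := hτ.isHermitian.le_opNorm_smul_one
    have hξ' := hξ.isHermitian.le_opNorm_smul_one
    push_cast [M]
    exact Matrix.kronecker_le_smul_one (hτ.kronecker hξ).nonneg hξ.nonneg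
      (Matrix.kronecker_le_smul_one hτ.nonneg hξ.nonneg hτ' hξ') hξ'
  have hscal : (1 - β) * M ≤ β / (d₁ * d₂ ^ 2) := by
    calc (1 - β) * M = (1 - β) * (d₁ * opNorm τ) / (d₁ * d₂ ^ 2) := by
          have : (d₁ : ℝ) ≠ 0 := NeZero.ne _
          simp only [M, hξn]; field_simp
      _ ≤ β / (d₁ * d₂ ^ 2) := by
          gcongr; exact sub_one_mul_le_of_div_one_add_le (by positivity) hthr
  have h1β : (0 : ℂ) ≤ ((1 - β : ℝ) : ℂ) := Complex.zero_le_real.mpr (by linarith [hβ.2])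
  rw [← Matrix.nonneg_iff_posSemidef, sub_nonneg]
  calc ((1 - β : ℝ) : ℂ) • (τ ⊗ₖ ξ ⊗ₖ ξ) ≤ ((1 - β : ℝ) : ℂ) • ((M : ℂ) • 1) :=
        smul_le_smul_of_nonneg_left hρ h1β
    _ = (((1 - β) * M : ℝ) : ℂ) • 1 := by rw [smul_smul]; push_cast; rfl
    _ ≤ (β / (d₁ * d₂ ^ 2) : ℂ) • 1 := by
        refine smul_le_smul_of_nonneg_right ?_ zero_le_one
        exact_mod_cast Complex.real_le_real.mpr hscal

theorem Y_posSemidef {d₁ d₂ : ℕ} [NeZero d₁] [NeZero d₂]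
    (τ : Matrix (Fin d₁) (Fin d₁) ℂ) (hτ : τ.PosSemidef) (hτtr : τ.trace = 1)
    (ξ : Matrix (Fin d₂) (Fin d₂) ℂ) (hξ : ξ.PosSemidef) (hξtr : ξ.trace = 1)
    (hξn : opNorm ξ = 1 / d₂)
    (β : ℝ) (hβ : β ∈ Set.Icc (0:ℝ) 1)
    (hthr : d₁ * opNorm τ / (1 + d₁ * opNorm τ) ≤ β) :
    ((β / (d₁ * d₂ ^ 2) : ℂ) •
        (1 : Matrix ((Fin d₁ × Fin d₂) × Fin d₂) ((Fin d₁ × Fin d₂) × Fin d₂) ℂ)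
      - ((1 - β : ℝ) : ℂ) • (τ ⊗ₖ ξ ⊗ₖ ξ)).PosSemidef :=
  Y_posSemidef_general τ hτ ξ hξ hξn β hβ hthr
end

section
/- Let ρ be a density operator on ℂ^{d₁} ⊗ ℂ^{d₂} with reduced state τ₁ = tr₂ ρ, and let ξ be a density operator on ℂ^{d₂}. Define the operator T = (ρ^{Γ}-style dilation) T_▶ on ℂ^{d₁} ⊗ ℂ^{d₂} ⊗ ℂ^{d₂} by T_▶ = Σ γ_{nn₁,mm₁} |e_n⟩⟨e_{n₁}| ⊗ (|f_m⟩⟨f_{m₁}| ⊗ ξ + ξ ⊗ |f_m⟩⟨f_{m₁}|) - τ₁ ⊗ ξ ⊗ ξ, where ρ = Σ γ_{nm,n₁m₁}|e_n⟩⟨e_{n₁}| ⊗ |f_m⟩⟨f_{m₁}| in orthonormal bases. Then the partial traces of T_▶ over the second and the third ℂ^{d₂} factors both equal ρ, and tr[T_▶] = 1. -/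
open ComplexOrder

theorem source_operator_dilation {d₁ d₂ : ℕ}
    (ρ : Matrix (Fin d₁ × Fin d₂) (Fin d₁ × Fin d₂) ℂ)
    (hρ : ρ.PosSemidef) (htr : ρ.trace = 1)
    (ξ : Matrix (Fin d₂) (Fin d₂) ℂ) (hξ : ξ.PosSemidef) (hξtr : ξ.trace = 1)
    (τ₁ : Matrix (Fin d₁) (Fin d₁) ℂ)
    (hτ₁ : τ₁ = Matrix.of fun i j => ∑ k : Fin d₂, ρ (i, k) (j, k))
    (T : Matrix ((Fin d₁ × Fin d₂) × Fin d₂) ((Fin d₁ × Fin d₂) × Fin d₂) ℂ)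
    (hT : T = Matrix.of fun p q =>
      ρ (p.1.1, p.1.2) (q.1.1, q.1.2) * ξ p.2 q.2
        + ρ (p.1.1, p.2) (q.1.1, q.2) * ξ p.1.2 q.1.2
        - τ₁ p.1.1 q.1.1 * ξ p.1.2 q.1.2 * ξ p.2 q.2) :
    (Matrix.of fun p q : Fin d₁ × Fin d₂ => ∑ k : Fin d₂, T (p, k) (q, k)) = ρ ∧
      (Matrix.of fun p q : Fin d₁ × Fin d₂ =>
        ∑ k : Fin d₂, T ((p.1, k), p.2) ((q.1, k), q.2)) = ρ ∧
      T.trace = 1 := by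
  have hξtr' : ∑ k : Fin d₂, ξ k k = 1 := hξtr
  subst hT hτ₁
  have h1 : (Matrix.of fun p q : Fin d₁ × Fin d₂ =>
      ∑ k : Fin d₂, (Matrix.of fun p q : (Fin d₁ × Fin d₂) × Fin d₂ =>
      ρ (p.1.1, p.1.2) (q.1.1, q.1.2) * ξ p.2 q.2
        + ρ (p.1.1, p.2) (q.1.1, q.2) * ξ p.1.2 q.1.2
        - (Matrix.of fun i j => ∑ k : Fin d₂, ρ (i, k) (j, k)) p.1.1 q.1.1
            * ξ p.1.2 q.1.2 * ξ p.2 q.2) (p, k) (q, k)) = ρ := by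
    ext ⟨i, j⟩ ⟨i', j'⟩
    simp only [Matrix.of_apply, Finset.sum_sub_distrib, Finset.sum_add_distrib,
      ← Finset.mul_sum, ← Finset.sum_mul, hξtr']
    ring
  refine ⟨h1, ?_, ?_⟩
  · ext ⟨i, j⟩ ⟨i', j'⟩
    simp only [Matrix.of_apply, Finset.sum_sub_distrib, Finset.sum_add_distrib,
      ← Finset.mul_sum, ← Finset.sum_mul, hξtr']
    ring
  · have := fun p q => congrFun (congrFun h1 p) q
    simp only [Matrix.of_apply] at this
    calc (Matrix.of fun p q : (Fin d₁ × Fin d₂) × Fin d₂ =>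
      ρ (p.1.1, p.1.2) (q.1.1, q.1.2) * ξ p.2 q.2
        + ρ (p.1.1, p.2) (q.1.1, q.2) * ξ p.1.2 q.1.2
        - (Matrix.of fun i j => ∑ k : Fin d₂, ρ (i, k) (j, k)) p.1.1 q.1.1
            * ξ p.1.2 q.1.2 * ξ p.2 q.2).trace
        = ∑ p : Fin d₁ × Fin d₂, ρ p p := by
          rw [Matrix.trace]
          rw [Fintype.sum_prod_type]
          exact Finset.sum_congr rfl fun p _ => this p p
      _ = 1 := htr
end
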